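/- arXiv:1505.02617 — 3 statements merged into one kernel-verified Lean document; each statement's English description precedes it below -/
import Mathlib

section
/- The max-min power control problem (16) is quasi-concave: fix the number of APs M ≥ 1, the number of users K ≥ 1, positive reals γ_{mk} and β_{mk} for 1 ≤ m ≤ M, 1 ≤ k ≤ K, nonnegative reals c_{k'k} for k' ≠ k, and ρ_d > 0. Let D be the set of triples (ς, ρ, θ) with ς ∈ ℝ^{M×K}, ρ = (ρ_{k'k})_{k'≠k}, θ ∈ ℝ^M satisfying: ς_{mk} ≥ 0 for all m,k; 0 ≤ θ_m ≤ 1 for all m; Σ_{k'=1}^K γ_{mk'} ς_{mk'}² ≤ θ_m² for all m; and Σ_{m=1}^M γ_{mk'} (β_{mk}/β_{mk'}) ς_{mk'} ≤ ρ_{k'k} for all k' ≠ k. Then D is convex, and the objective function F(ς, ρ, θ) := min_{1 ≤ k ≤ K} (Σ_{m=1}^M γ_{mk} ς_{mk})² / (Σ_{k'≠k} c_{k'k} ρ_{k'k}² + Σ_{m=1}^M β_{mk} θ_m² + 1/ρ_d) is quasi-concave on D, i.e., for every t ∈ ℝ the superlevel set {(ς,ρ,θ) ∈ D : F(ς,ρ,θ)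 ≥ t} is convex. -/
open Finset

/-- Cauchy–Schwarz style convexity of the Euclidean norm: a convex combination
of two vectors, measured in squared norm, is bounded by the square of the
convex combination of the norms. -/
private lemma sum_sq_combo {ι : Type*} [Fintype ι] (u v : ι → ℝ) (a b : ℝ)
    (ha : 0 ≤ a) (hb : 0 ≤ b) :
    ∑ i, (a * u i + b * v i) ^ 2 ≤
      (a * Real.sqrt (∑ i, u i ^ 2) + b * Real.sqrt (∑ i, v i ^ 2)) ^ 2 := by
  set U := ∑ i, u i ^ 2 with hU'
  set V := ∑ i, v i ^ 2 with hV'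
  have hU : 0 ≤ U := Finset.sum_nonneg fun i _ => sq_nonneg _
  have hV : 0 ≤ V := Finset.sum_nonneg fun i _ => sq_nonneg _
  have hcs : (∑ i, u i * v i) ^ 2 ≤ U * V := Finset.sum_mul_sq_le_sq_mul_sq _ _ _
  have hcross : ∑ i, u i * v i ≤ Real.sqrt U * Real.sqrt V := by
    calc ∑ i, u i * v i ≤ |∑ i, u i * v i| := le_abs_self _
      _ = Real.sqrt ((∑ i, u i * v i) ^ 2) := (Real.sqrt_sq_eq_abs _).symm
      _ ≤ Real.sqrt (U * V) := Real.sqrt_le_sqrt hcs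
      _ = Real.sqrt U * Real.sqrt V := Real.sqrt_mul hU _
  have expand : ∑ i, (a * u i + b * v i) ^ 2
      = a ^ 2 * U + 2 * a * b * (∑ i, u i * v i) + b ^ 2 * V := by
    rw [hU', hV', Finset.mul_sum, Finset.mul_sum, Finset.mul_sum, ← Finset.sum_add_distrib,
      ← Finset.sum_add_distrib]
    exact Finset.sum_congr rfl fun i _ => by ring
  rw [expand]
  nlinarith [Real.sq_sqrt hU, Real.sq_sqrt hV, Real.sqrt_nonneg U, Real.sqrt_nonneg V,
    mul_nonneg ha hb]

/-- Quasi-concavity of the max-min power control problem (16): the feasible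
region `D` (per-AP second-order-cone power constraints plus linear slack
constraints) is convex, and the objective
`F = min_k (∑_m γ_{mk} ς_{mk})^2 / (∑_{k'≠k} c_{k'k} ρ_{k'k}^2 + ∑_m β_{mk} θ_m^2 + 1/ρ_d)`
is quasi-concave on `D`: every superlevel set `{p ∈ D | F p ≥ t}` is convex. -/
theorem maxmin_power_control_quasiconcave (M K : ℕ) (hM : 1 ≤ M) (hK : 1 ≤ K)
    (γ : Fin M → Fin K → ℝ) (hγ : ∀ m k, 0 < γ m k)
    (β : Fin M → Fin K → ℝ) (hβ : ∀ m k, 0 < β m k)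
    (c : Fin K → Fin K → ℝ) (hc : ∀ k' k, k' ≠ k → 0 ≤ c k' k)
    (ρd : ℝ) (hρd : 0 < ρd)
    (D : Set ((Fin M → Fin K → ℝ) × (Fin K → Fin K → ℝ) × (Fin M → ℝ)))
    (hD : D = {p | (∀ m k, 0 ≤ p.1 m k) ∧
      (∀ m, 0 ≤ p.2.2 m ∧ p.2.2 m ≤ 1) ∧
      (∀ m, ∑ k', γ m k' * (p.1 m k') ^ 2 ≤ (p.2.2 m) ^ 2) ∧
      (∀ k k' : Fin K, k' ≠ k →
        ∑ m, γ m k' * (β m k / β m k') * p.1 m k' ≤ p.2.1 k' k)})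
    (F : ((Fin M → Fin K → ℝ) × (Fin K → Fin K → ℝ) × (Fin M → ℝ)) → ℝ)
    (hF : F = fun p => ⨅ k : Fin K,
      (∑ m, γ m k * p.1 m k) ^ 2 /
        (∑ k' ∈ univ \ {k}, c k' k * (p.2.1 k' k) ^ 2
          + ∑ m, β m k * (p.2.2 m) ^ 2 + 1 / ρd)) :
    Convex ℝ D ∧ ∀ t : ℝ, Convex ℝ {p ∈ D | t ≤ F p} := by
  subst hF
  have _inst : Nonempty (Fin K) := ⟨⟨0, hK⟩⟩
  -- Part 1: convexity of D
  have hDconv : Convex ℝ D := by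
    rw [hD]
    intro p hp q hq a b ha hb hab
    obtain ⟨hp1, hp2, hp3, hp4⟩ := hp
    obtain ⟨hq1, hq2, hq3, hq4⟩ := hq
    simp only [Set.mem_setOf_eq, Prod.fst_add, Prod.smul_fst, Prod.snd_add, Prod.smul_snd,
      Pi.add_apply, Pi.smul_apply, smul_eq_mul]
    refine ⟨?_, ?_, ?_, ?_⟩
    · intro m k
      exact add_nonneg (mul_nonneg ha (hp1 m k)) (mul_nonneg hb (hq1 m k))
    · intro m
      refine ⟨add_nonneg (mul_nonneg ha (hp2 m).1) (mul_nonneg hb (hq2 m).1), ?_⟩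
      calc a * p.2.2 m + b * q.2.2 m ≤ a * 1 + b * 1 :=
            add_le_add (mul_le_mul_of_nonneg_left (hp2 m).2 ha)
              (mul_le_mul_of_nonneg_left (hq2 m).2 hb)
        _ = 1 := by rw [mul_one, mul_one, hab]
    · intro m
      set u : Fin K → ℝ := fun k' => Real.sqrt (γ m k') * p.1 m k' with hu'
      set v : Fin K → ℝ := fun k' => Real.sqrt (γ m k') * q.1 m k' with hv'
      have h1 : ∑ k', γ m k' * (a * p.1 m k' + b * q.1 m k') ^ 2
          = ∑ k', (a * u k' + b * v k') ^ 2 := by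
        refine Finset.sum_congr rfl fun k' _ => ?_
        rw [hu', hv']
        have : a * (Real.sqrt (γ m k') * p.1 m k') + b * (Real.sqrt (γ m k') * q.1 m k')
            = Real.sqrt (γ m k') * (a * p.1 m k' + b * q.1 m k') := by ring
        rw [this, mul_pow, Real.sq_sqrt (hγ m k').le]
      have hu2 : ∑ k', u k' ^ 2 = ∑ k', γ m k' * (p.1 m k') ^ 2 :=
        Finset.sum_congr rfl fun k' _ => by
          rw [hu', mul_pow, Real.sq_sqrt (hγ m k').le]
      have hv2 : ∑ k', v k' ^ 2 = ∑ k', γ m k' * (q.1 m k') ^ 2 :=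
        Finset.sum_congr rfl fun k' _ => by
          rw [hv', mul_pow, Real.sq_sqrt (hγ m k').le]
      have hup : Real.sqrt (∑ k', u k' ^ 2) ≤ p.2.2 m := by
        rw [hu2]
        calc Real.sqrt (∑ k', γ m k' * (p.1 m k') ^ 2) ≤ Real.sqrt ((p.2.2 m) ^ 2) :=
              Real.sqrt_le_sqrt (hp3 m)
          _ = p.2.2 m := Real.sqrt_sq (hp2 m).1
      have hvq : Real.sqrt (∑ k', v k' ^ 2) ≤ q.2.2 m := by
        rw [hv2]
        calc Real.sqrt (∑ k', γ m k' * (q.1 m k') ^ 2) ≤ Real.sqrt ((q.2.2 m) ^ 2) :=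
              Real.sqrt_le_sqrt (hq3 m)
          _ = q.2.2 m := Real.sqrt_sq (hq2 m).1
      calc ∑ k', γ m k' * (a * p.1 m k' + b * q.1 m k') ^ 2
          = ∑ k', (a * u k' + b * v k') ^ 2 := h1
        _ ≤ (a * Real.sqrt (∑ k', u k' ^ 2) + b * Real.sqrt (∑ k', v k' ^ 2)) ^ 2 :=
            sum_sq_combo u v a b ha hb
        _ ≤ (a * p.2.2 m + b * q.2.2 m) ^ 2 := by
            refine pow_le_pow_left₀ ?_ ?_ 2
            · exact add_nonneg (mul_nonneg ha (Real.sqrt_nonneg _))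
                (mul_nonneg hb (Real.sqrt_nonneg _))
            · exact add_le_add (mul_le_mul_of_nonneg_left hup ha)
                (mul_le_mul_of_nonneg_left hvq hb)
    · intro k k' hkk
      calc ∑ m, γ m k' * (β m k / β m k') * (a * p.1 m k' + b * q.1 m k')
          = a * ∑ m, γ m k' * (β m k / β m k') * p.1 m k'
            + b * ∑ m, γ m k' * (β m k / β m k') * q.1 m k' := by
            rw [Finset.mul_sum, Finset.mul_sum, ← Finset.sum_add_distrib]
            exact Finset.sum_congr rfl fun m _ => by ring
        _ ≤ a * p.2.1 k' k + b * q.2.1 k' k :=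
            add_le_add (mul_le_mul_of_nonneg_left (hp4 k k' hkk) ha)
              (mul_le_mul_of_nonneg_left (hq4 k k' hkk) hb)
  refine ⟨hDconv, ?_⟩
  -- Part 2: superlevel sets are convex
  intro t p hp q hq a b ha hb hab
  obtain ⟨hpD, hpF⟩ := hp
  obtain ⟨hqD, hqF⟩ := hq
  refine ⟨hDconv hpD hqD ha hb hab, ?_⟩
  set r := a • p + b • q with hr
  have hbdd : ∀ x : (Fin M → Fin K → ℝ) × (Fin K → Fin K → ℝ) × (Fin M → ℝ),
      BddBelow (Set.range fun k : Fin K => (∑ m, γ m k * x.1 m k) ^ 2 /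
        (∑ k' ∈ univ \ {k}, c k' k * (x.2.1 k' k) ^ 2
          + ∑ m, β m k * (x.2.2 m) ^ 2 + 1 / ρd)) :=
    fun x => (Set.finite_range _).bddBelow
  refine le_ciInf fun k => ?_
  -- denominators are positive
  have hDen : ∀ x : (Fin M → Fin K → ℝ) × (Fin K → Fin K → ℝ) × (Fin M → ℝ),
      0 < ∑ k' ∈ univ \ {k}, c k' k * (x.2.1 k' k) ^ 2
        + ∑ m, β m k * (x.2.2 m) ^ 2 + 1 / ρd := by
    intro x
    have h1 : 0 ≤ ∑ k' ∈ univ \ {k}, c k' k * (x.2.1 k' k) ^ 2 :=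
      Finset.sum_nonneg fun k' hk' =>
        mul_nonneg (hc k' k (Finset.notMem_singleton.mp (Finset.mem_sdiff.mp hk').2))
          (sq_nonneg _)
    have h2 : 0 ≤ ∑ m, β m k * (x.2.2 m) ^ 2 :=
      Finset.sum_nonneg fun m _ => mul_nonneg (hβ m k).le (sq_nonneg _)
    have h3 : 0 < 1 / ρd := by positivity
    linarith
  rcases le_or_gt t 0 with ht | ht
  · exact ht.trans (div_nonneg (sq_nonneg _) (hDen r).le)
  -- now t > 0
  have hpk : t ≤ (∑ m, γ m k * p.1 m k) ^ 2 /
      (∑ k' ∈ univ \ {k}, c k' k * (p.2.1 k' k) ^ 2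
        + ∑ m, β m k * (p.2.2 m) ^ 2 + 1 / ρd) :=
    hpF.trans (ciInf_le (hbdd p) k)
  have hqk : t ≤ (∑ m, γ m k * q.1 m k) ^ 2 /
      (∑ k' ∈ univ \ {k}, c k' k * (q.2.1 k' k) ^ 2
        + ∑ m, β m k * (q.2.2 m) ^ 2 + 1 / ρd) :=
    hqF.trans (ciInf_le (hbdd q) k)
  rw [hD] at hpD hqD
  have hNp : 0 ≤ ∑ m, γ m k * p.1 m k :=
    Finset.sum_nonneg fun m _ => mul_nonneg (hγ m k).le (hpD.1 m k)
  have hNq : 0 ≤ ∑ m, γ m k * q.1 m k :=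
    Finset.sum_nonneg fun m _ => mul_nonneg (hγ m k).le (hqD.1 m k)
  have hp' : t * (∑ k' ∈ univ \ {k}, c k' k * (p.2.1 k' k) ^ 2
      + ∑ m, β m k * (p.2.2 m) ^ 2 + 1 / ρd) ≤ (∑ m, γ m k * p.1 m k) ^ 2 :=
    (le_div_iff₀ (hDen p)).mp hpk
  have hq' : t * (∑ k' ∈ univ \ {k}, c k' k * (q.2.1 k' k) ^ 2
      + ∑ m, β m k * (q.2.2 m) ^ 2 + 1 / ρd) ≤ (∑ m, γ m k * q.1 m k) ^ 2 :=
    (le_div_iff₀ (hDen q)).mp hqk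
  have keyp : Real.sqrt t * Real.sqrt (∑ k' ∈ univ \ {k}, c k' k * (p.2.1 k' k) ^ 2
      + ∑ m, β m k * (p.2.2 m) ^ 2 + 1 / ρd) ≤ ∑ m, γ m k * p.1 m k := by
    rw [← Real.sqrt_mul ht.le]
    calc Real.sqrt _ ≤ Real.sqrt ((∑ m, γ m k * p.1 m k) ^ 2) := Real.sqrt_le_sqrt hp'
      _ = ∑ m, γ m k * p.1 m k := Real.sqrt_sq hNp
  have keyq : Real.sqrt t * Real.sqrt (∑ k' ∈ univ \ {k}, c k' k * (q.2.1 k' k) ^ 2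
      + ∑ m, β m k * (q.2.2 m) ^ 2 + 1 / ρd) ≤ ∑ m, γ m k * q.1 m k := by
    rw [← Real.sqrt_mul ht.le]
    calc Real.sqrt _ ≤ Real.sqrt ((∑ m, γ m k * q.1 m k) ^ 2) := Real.sqrt_le_sqrt hq'
      _ = ∑ m, γ m k * q.1 m k := Real.sqrt_sq hNq
  -- the square root of the denominator is convex: encode it as a Euclidean norm
  set w : ((Fin M → Fin K → ℝ) × (Fin K → Fin K → ℝ) × (Fin M → ℝ)) →
      (Fin K ⊕ (Fin M ⊕ Unit)) → ℝ :=
    fun x => Sum.elim (fun k' => Real.sqrt (if k' = k then 0 else c k' k) * x.2.1 k' k)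
      (Sum.elim (fun m => Real.sqrt (β m k) * x.2.2 m) (fun _ => Real.sqrt (1 / ρd))) with hw
  have hsum : ∀ x : (Fin M → Fin K → ℝ) × (Fin K → Fin K → ℝ) × (Fin M → ℝ),
      ∑ i, (w x i) ^ 2 = ∑ k' ∈ univ \ {k}, c k' k * (x.2.1 k' k) ^ 2
        + ∑ m, β m k * (x.2.2 m) ^ 2 + 1 / ρd := by
    intro x
    rw [Fintype.sum_sum_type, Fintype.sum_sum_type]
    have e1 : ∑ k', (w x (Sum.inl k')) ^ 2
        = ∑ k' ∈ univ \ {k}, c k' k * (x.2.1 k' k) ^ 2 := by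
      have step : ∀ k' : Fin K, (w x (Sum.inl k')) ^ 2
          = (if k' = k then (0:ℝ) else c k' k) * (x.2.1 k' k) ^ 2 := by
        intro k'
        rw [hw]
        simp only [Sum.elim_inl]
        rw [mul_pow, Real.sq_sqrt]
        split_ifs with h
        · exact le_refl 0
        · exact hc k' k h
      rw [Finset.sum_congr rfl fun k' _ => step k']
      rw [← Finset.sum_subset (Finset.sdiff_subset :
          (univ : Finset (Fin K)) \ {k} ⊆ univ) ?_]
      · exact Finset.sum_congr rfl fun k' hk' => by
          rw [if_neg (Finset.notMem_singleton.mp (Finset.mem_sdiff.mp hk').2)]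
      · intro k' _ hk'
        have : k' = k := by
          by_contra hne
          exact hk' (Finset.mem_sdiff.mpr ⟨Finset.mem_univ _,
            Finset.notMem_singleton.mpr hne⟩)
        rw [if_pos this, zero_mul]
    have e2 : ∑ m', (w x (Sum.inr (Sum.inl m'))) ^ 2 = ∑ m, β m k * (x.2.2 m) ^ 2 := by
      refine Finset.sum_congr rfl fun m _ => ?_
      rw [hw]
      simp only [Sum.elim_inr, Sum.elim_inl]
      rw [mul_pow, Real.sq_sqrt (hβ m k).le]
    have e3 : ∑ u : Unit, (w x (Sum.inr (Sum.inr u))) ^ 2 = 1 / ρd := by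
      rw [hw]
      simp only [Sum.elim_inr]
      rw [Fintype.sum_unique, Real.sq_sqrt (by positivity : (0:ℝ) ≤ 1 / ρd)]
    rw [e1, e2, e3]
    ring
  -- the combination point, componentwise
  have hwr : ∀ i, w r i = a * w p i + b * w q i := by
    rintro (k' | m | u)
    · rw [hw]
      simp only [Sum.elim_inl, hr, Prod.snd_add, Prod.smul_snd, Prod.fst_add, Prod.smul_fst,
        Pi.add_apply, Pi.smul_apply, smul_eq_mul]
      ring
    · rw [hw]
      simp only [Sum.elim_inr, Sum.elim_inl, hr, Prod.snd_add, Prod.smul_snd,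
        Pi.add_apply, Pi.smul_apply, smul_eq_mul]
      ring
    · rw [hw]
      simp only [Sum.elim_inr]
      rw [← add_mul, hab, one_mul]
  have hDr : ∑ k' ∈ univ \ {k}, c k' k * (r.2.1 k' k) ^ 2
        + ∑ m, β m k * (r.2.2 m) ^ 2 + 1 / ρd
      ≤ (a * Real.sqrt (∑ k' ∈ univ \ {k}, c k' k * (p.2.1 k' k) ^ 2
            + ∑ m, β m k * (p.2.2 m) ^ 2 + 1 / ρd)
        + b * Real.sqrt (∑ k' ∈ univ \ {k}, c k' k * (q.2.1 k' k) ^ 2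
            + ∑ m, β m k * (q.2.2 m) ^ 2 + 1 / ρd)) ^ 2 := by
    calc ∑ k' ∈ univ \ {k}, c k' k * (r.2.1 k' k) ^ 2
          + ∑ m, β m k * (r.2.2 m) ^ 2 + 1 / ρd
        = ∑ i, (w r i) ^ 2 := (hsum r).symm
      _ = ∑ i, (a * w p i + b * w q i) ^ 2 :=
          Finset.sum_congr rfl fun i _ => by rw [hwr i]
      _ ≤ (a * Real.sqrt (∑ i, (w p i) ^ 2) + b * Real.sqrt (∑ i, (w q i) ^ 2)) ^ 2 :=
          sum_sq_combo (w p) (w q) a b ha hb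
      _ = _ := by rw [hsum p, hsum q]
  have hNr : ∑ m, γ m k * r.1 m k
      = a * ∑ m, γ m k * p.1 m k + b * ∑ m, γ m k * q.1 m k := by
    rw [Finset.mul_sum, Finset.mul_sum, ← Finset.sum_add_distrib]
    refine Finset.sum_congr rfl fun m _ => ?_
    simp only [hr, Prod.fst_add, Prod.smul_fst, Pi.add_apply, Pi.smul_apply, smul_eq_mul]
    ring
  -- finish
  rw [le_div_iff₀ (hDen r), hNr]
  set sp := Real.sqrt (∑ k' ∈ univ \ {k}, c k' k * (p.2.1 k' k) ^ 2
      + ∑ m, β m k * (p.2.2 m) ^ 2 + 1 / ρd) with hsp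
  set sq' := Real.sqrt (∑ k' ∈ univ \ {k}, c k' k * (q.2.1 k' k) ^ 2
      + ∑ m, β m k * (q.2.2 m) ^ 2 + 1 / ρd) with hsq'
  have hs : 0 ≤ a * sp + b * sq' :=
    add_nonneg (mul_nonneg ha (Real.sqrt_nonneg _)) (mul_nonneg hb (Real.sqrt_nonneg _))
  have h1 : Real.sqrt t * (a * sp + b * sq')
      ≤ a * ∑ m, γ m k * p.1 m k + b * ∑ m, γ m k * q.1 m k := by
    have he : Real.sqrt t * (a * sp + b * sq')
        = a * (Real.sqrt t * sp) + b * (Real.sqrt t * sq') := by ring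
    rw [he]
    exact add_le_add (mul_le_mul_of_nonneg_left keyp ha)
      (mul_le_mul_of_nonneg_left keyq hb)
  have h2 : (Real.sqrt t * (a * sp + b * sq')) ^ 2
      ≤ (a * ∑ m, γ m k * p.1 m k + b * ∑ m, γ m k * q.1 m k) ^ 2 :=
    pow_le_pow_left₀ (mul_nonneg (Real.sqrt_nonneg _) hs) h1 2
  have h3 : (Real.sqrt t * (a * sp + b * sq')) ^ 2 = t * (a * sp + b * sq') ^ 2 := by
    rw [mul_pow, Real.sq_sqrt ht.le]
  calc t * (∑ k' ∈ univ \ {k}, c k' k * (r.2.1 k' k) ^ 2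
        + ∑ m, β m k * (r.2.2 m) ^ 2 + 1 / ρd)
      ≤ t * (a * sp + b * sq') ^ 2 := mul_le_mul_of_nonneg_left hDr ht.le
    _ = (Real.sqrt t * (a * sp + b * sq')) ^ 2 := h3.symm
    _ ≤ _ := h2
end

section
/- Superlevel sets of the per-user SINR ratio are convex: let a ∈ ℝⁿ with a_i ≥ 0 for all i, b ∈ ℝ^p with b_j ≥ 0 for all j, e > 0, and t ≥ 0. Then the set S = {(x, y) ∈ ℝⁿ × ℝ^p : x_i ≥ 0 for all i, and (Σ_{i=1}^n a_i x_i)² ≥ t·(Σ_{j=1}^p b_j y_j² + e)} is a convex subset of ℝⁿ × ℝ^p. -/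
open Finset

/-- Superlevel sets of the per-user SINR ratio are convex: for nonnegative
coefficients `a`, `b`, a positive constant `e` and level `t ≥ 0`, the set of
pairs `(x, y)` with `x` in the nonnegative orthant satisfying
`(∑ i, a i * x i)^2 ≥ t * (∑ j, b j * (y j)^2 + e)` is convex. -/
theorem sinr_superlevel_convex (n p : ℕ) (a : Fin n → ℝ) (ha : ∀ i, 0 ≤ a i)
    (b : Fin p → ℝ) (hb : ∀ j, 0 ≤ b j) (e : ℝ) (he : 0 < e) (t : ℝ) (ht : 0 ≤ t) :
    Convex ℝ {xy : (Fin n → ℝ) × (Fin p → ℝ) |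
      (∀ i, 0 ≤ xy.1 i) ∧
      t * (∑ j, b j * (xy.2 j) ^ 2 + e) ≤ (∑ i, a i * xy.1 i) ^ 2} := by
  rintro ⟨x, y⟩ ⟨hx, hxy⟩ ⟨x', y'⟩ ⟨hx', hxy'⟩ α β hα hβ hαβ
  constructor
  · intro i
    exact add_nonneg (mul_nonneg hα (hx i)) (mul_nonneg hβ (hx' i))
  · set L : ℝ := ∑ i, a i * x i with hL
    set L' : ℝ := ∑ i, a i * x' i with hL'
    have hLnn : 0 ≤ L := Finset.sum_nonneg fun i _ => mul_nonneg (ha i) (hx i)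
    have hL'nn : 0 ≤ L' := Finset.sum_nonneg fun i _ => mul_nonneg (ha i) (hx' i)
    set A : ℝ := ∑ j, b j * (y j) ^ 2 with hA
    set B : ℝ := ∑ j, b j * (y' j) ^ 2 with hB
    set S : ℝ := ∑ j, b j * (y j * y' j) with hS
    -- Cauchy-Schwarz : S^2 ≤ A * B
    have hCS : S ^ 2 ≤ A * B := by
      have := Finset.sum_mul_sq_le_sq_mul_sq Finset.univ
        (fun j => Real.sqrt (b j) * y j) (fun j => Real.sqrt (b j) * y' j)
      have h1 : ∀ j : Fin p, (Real.sqrt (b j) * y j) * (Real.sqrt (b j) * y' j)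
          = b j * (y j * y' j) := by
        intro j
        rw [show Real.sqrt (b j) * y j * (Real.sqrt (b j) * y' j)
            = (Real.sqrt (b j) * Real.sqrt (b j)) * (y j * y' j) by ring,
          Real.mul_self_sqrt (hb j)]
      have h2 : ∀ j : Fin p, (Real.sqrt (b j) * y j) ^ 2 = b j * (y j) ^ 2 := by
        intro j
        rw [mul_pow, Real.sq_sqrt (hb j)]
      have h3 : ∀ j : Fin p, (Real.sqrt (b j) * y' j) ^ 2 = b j * (y' j) ^ 2 := by
        intro j
        rw [mul_pow, Real.sq_sqrt (hb j)]
      simpa only [Finset.sum_congr rfl fun j _ => h1 j,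
        Finset.sum_congr rfl fun j _ => h2 j,
        Finset.sum_congr rfl fun j _ => h3 j] using this
    have h2S : 2 * S ≤ A + B := by
      have : (0:ℝ) ≤ ∑ j, b j * (y j - y' j) ^ 2 :=
        Finset.sum_nonneg fun j _ => mul_nonneg (hb j) (sq_nonneg _)
      have hexp : ∑ j, b j * (y j - y' j) ^ 2 = A + B - 2 * S := by
        rw [hA, hB, hS, ← Finset.sum_add_distrib, Finset.mul_sum, ← Finset.sum_sub_distrib]
        exact Finset.sum_congr rfl fun j _ => by ring
      linarith [hexp ▸ this]
    -- combined quantities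
    have hsum1 : ∑ i, a i * (α • x + β • x') i = α * L + β * L' := by
      simp only [hL, hL', Finset.mul_sum, ← Finset.sum_add_distrib]
      exact Finset.sum_congr rfl fun i _ => by
        simp [Pi.add_apply, Pi.smul_apply, smul_eq_mul]; ring
    have hsum2 : ∑ j, b j * ((α • y + β • y') j) ^ 2
        = α ^ 2 * A + β ^ 2 * B + 2 * α * β * S := by
      simp only [hA, hB, hS, Finset.mul_sum, ← Finset.sum_add_distrib]
      exact Finset.sum_congr rfl fun j _ => by
        simp [Pi.add_apply, Pi.smul_apply, smul_eq_mul]; ring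
    simp only [Set.mem_setOf_eq, Prod.smul_fst, Prod.smul_snd, Prod.fst_add, Prod.snd_add]
    rw [hsum1, hsum2]
    -- key inequalities
    have hQ : t * (A + e) ≤ L ^ 2 := hxy
    have hQ' : t * (B + e) ≤ L' ^ 2 := hxy'
    have hC2 : (t * (S + e)) ^ 2 ≤ (t * (A + e)) * (t * (B + e)) := by
      have h : (S + e) ^ 2 ≤ (A + e) * (B + e) := by nlinarith [hCS, h2S, he.le]
      calc (t * (S + e)) ^ 2 = t ^ 2 * (S + e) ^ 2 := by ring
        _ ≤ t ^ 2 * ((A + e) * (B + e)) := by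
            exact mul_le_mul_of_nonneg_left h (sq_nonneg t)
        _ = (t * (A + e)) * (t * (B + e)) := by ring
    have hAnn : 0 ≤ A := Finset.sum_nonneg fun j _ => mul_nonneg (hb j) (sq_nonneg _)
    have hBnn : 0 ≤ B := Finset.sum_nonneg fun j _ => mul_nonneg (hb j) (sq_nonneg _)
    have hAe : 0 ≤ t * (A + e) := by positivity
    have hBe : 0 ≤ t * (B + e) := by positivity
    have hCLL : t * (S + e) ≤ L * L' := by
      nlinarith [hC2, mul_le_mul hQ hQ' hBe (sq_nonneg L), mul_nonneg hLnn hL'nn,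
        sq_nonneg (t * (S + e) - L * L'), sq_nonneg (t * (S + e) + L * L')]
    have hsq : (α + β) ^ 2 = 1 := by rw [hαβ]; norm_num
    have key : t * (α ^ 2 * A + β ^ 2 * B + 2 * α * β * S + e)
        = α ^ 2 * (t * (A + e)) + β ^ 2 * (t * (B + e)) + 2 * α * β * (t * (S + e)) := by
      rw [show β = 1 - α from by linarith]; ring
    rw [key]
    calc α ^ 2 * (t * (A + e)) + β ^ 2 * (t * (B + e)) + 2 * α * β * (t * (S + e))
        ≤ α ^ 2 * L ^ 2 + β ^ 2 * L' ^ 2 + 2 * α * β * (L * L') := by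
          gcongr <;> positivity
      _ = (α * L + β * L') ^ 2 := by ring
end

section
/- Coherent pilot-contamination cross term: under the second-moment pilot model for one AP, for any two user indices k ≠ k', the channel g_k and the estimate ĝ_{k'} = √(τρ_p) β_{k'} ỹ_{k'} / (τρ_p Σ_{j=1}^K β_j |φ_{k'}ᴴφ_j|² + 1) of user k''s channel satisfy E[g_k · conj(ĝ_{k'})] = γ_{k'} (β_k/β_{k'}) · conj(φ_{k'}ᴴ φ_k), where γ_{k'} = τρ_p β_{k'}² / (τρ_p Σ_j β_j |φ_{k'}ᴴφ_j|² + 1). In particular |E[g_k · conj(ĝ_{k'})]| = γ_{k'} (β_k/β_{k'}) |φ_{k'}ᴴφ_k|, which vanishes when the pilots φ_k and φ_{k'} are orthogonal. -/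
open MeasureTheory ProbabilityTheory Finset

private lemma memL2_conj {Ω : Type*} [MeasurableSpace Ω] {μ : Measure Ω} {f : Ω → ℂ}
    (hf : MemLp f 2 μ) : MemLp (fun ω => (starRingEnd ℂ) (f ω)) 2 μ :=
  ⟨Complex.continuous_conj.comp_aestronglyMeasurable hf.1, by
    have he : eLpNorm (fun ω => (starRingEnd ℂ) (f ω)) 2 μ = eLpNorm f 2 μ :=
      eLpNorm_congr_norm_ae (Filter.Eventually.of_forall fun ω => RCLike.norm_conj _)
    rw [he]; exact hf.2⟩

private lemma int_mul_conj {Ω : Type*} [MeasurableSpace Ω] {μ : Measure Ω} {f h : Ω → ℂ}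
    (hf : MemLp f 2 μ) (hh : MemLp h 2 μ) :
    Integrable (fun ω => f ω * (starRingEnd ℂ) (h ω)) μ := by
  have := (memL2_conj hh).smul (φ := f) hf
    (p := 2) (q := 2) (r := 1) (hpqr := ⟨by simp only [inv_one]; exact ENNReal.inv_two_add_inv_two⟩)
  rw [memLp_one_iff_integrable] at this
  exact this

/-- Coherent pilot-contamination cross term: under the second-moment pilot
model for one AP, for users `k ≠ k'` the channel `g_k` and the estimate
`ĝ_{k'}` of user `k'`'s channel satisfy
`E[g_k ĝ_{k'}^*] = γ_{k'} (β_k/β_{k'}) conj(φ_{k'}ᴴφ_k)`; in particular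
`|E[g_k ĝ_{k'}^*]| = γ_{k'} (β_k/β_{k'}) |φ_{k'}ᴴφ_k|`, which vanishes when
the pilots `φ_k` and `φ_{k'}` are orthogonal. -/
theorem pilot_contamination_cross_term
    {Ω : Type*} [MeasurableSpace Ω] (μ : Measure Ω) [IsProbabilityMeasure μ]
    (K τ : ℕ) (τρp : ℝ) (hτρp : 0 < τρp)
    (φ : Fin K → EuclideanSpace ℂ (Fin τ)) (hφ : ∀ j, ‖φ j‖ = 1)
    (k k' : Fin K) (hkk' : k ≠ k')
    (g : Fin K → Ω → ℂ) (hg2 : ∀ j, MemLp (g j) 2 μ)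
    (hgmean : ∀ j, ∫ ω, g j ω ∂μ = 0)
    (β : Fin K → ℝ) (hβ : ∀ j, 0 < β j)
    (hgvar : ∀ j, ∫ ω, ‖g j ω‖ ^ 2 ∂μ = β j)
    (hguncorr : ∀ j j', j ≠ j' →
      ∫ ω, g j ω * (starRingEnd ℂ) (g j' ω) ∂μ = 0)
    (w : Fin τ → Ω → ℂ) (hw2 : ∀ i, MemLp (w i) 2 μ)
    (hwmean : ∀ i, ∫ ω, w i ω ∂μ = 0)
    (hwcov : ∀ i j, ∫ ω, w i ω * (starRingEnd ℂ) (w j ω) ∂μ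
      = if i = j then 1 else 0)
    (hgw : ∀ j i, ∫ ω, g j ω * (starRingEnd ℂ) (w i ω) ∂μ = 0)
    (ytil : Ω → ℂ)
    (hytil : ytil = fun ω => (Real.sqrt τρp : ℂ) *
        ∑ j, g j ω * (inner ℂ (φ k') (φ j) : ℂ)
      + ∑ i, (starRingEnd ℂ) (φ k' i) * w i ω)
    (ghat : Ω → ℂ)
    (hghat : ghat = fun ω =>
      ((Real.sqrt τρp * β k'
        / (τρp * ∑ j, β j * ‖(inner ℂ (φ k') (φ j) : ℂ)‖ ^ 2 + 1) : ℝ) : ℂ)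
      * ytil ω)
    (γ : ℝ)
    (hγ : γ = τρp * (β k') ^ 2
      / (τρp * ∑ j, β j * ‖(inner ℂ (φ k') (φ j) : ℂ)‖ ^ 2 + 1)) :
    (∫ ω, g k ω * (starRingEnd ℂ) (ghat ω) ∂μ
      = ((γ * (β k / β k') : ℝ) : ℂ) * (starRingEnd ℂ) (inner ℂ (φ k') (φ k) : ℂ)) ∧
    ‖∫ ω, g k ω * (starRingEnd ℂ) (ghat ω) ∂μ‖
      = γ * (β k / β k') * ‖(inner ℂ (φ k') (φ k) : ℂ)‖ ∧
    ((inner ℂ (φ k') (φ k) : ℂ) = 0 →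
      ∫ ω, g k ω * (starRingEnd ℂ) (ghat ω) ∂μ = 0) := by
  set S : ℝ := ∑ j, β j * ‖(inner ℂ (φ k') (φ j) : ℂ)‖ ^ 2 with hS
  have hSnn : 0 ≤ S := Finset.sum_nonneg fun j _ =>
    mul_nonneg (hβ j).le (by positivity)
  have hD : 0 < τρp * S + 1 := by positivity
  set D : ℝ := τρp * S + 1 with hDdef
  set c : ℝ := Real.sqrt τρp * β k' / D with hc
  -- integrals of individual cross terms
  have hgkgk : ∫ ω, g k ω * (starRingEnd ℂ) (g k ω) ∂μ = ((β k : ℝ) : ℂ) := by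
    have h1 : ∀ ω, g k ω * (starRingEnd ℂ) (g k ω) = ((‖g k ω‖ ^ 2 : ℝ) : ℂ) := by
      intro ω
      rw [Complex.mul_conj]
      norm_cast
      rw [Complex.normSq_eq_norm_sq]
    simp_rw [h1]
    rw [← hgvar k]
    exact integral_ofReal
  have hIntgg : ∀ j, Integrable (fun ω => g k ω * (starRingEnd ℂ) (g j ω)) μ :=
    fun j => int_mul_conj (hg2 k) (hg2 j)
  have hIntgw : ∀ i, Integrable (fun ω => g k ω * (starRingEnd ℂ) (w i ω)) μ :=
    fun i => int_mul_conj (hg2 k) (hw2 i)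
  -- compute E[g_k conj(ytil)]
  have hconjy : ∀ ω, (starRingEnd ℂ) (ytil ω)
      = (Real.sqrt τρp : ℂ) * ∑ j, (starRingEnd ℂ) (g j ω)
          * (starRingEnd ℂ) (inner ℂ (φ k') (φ j) : ℂ)
        + ∑ i, (φ k' i) * (starRingEnd ℂ) (w i ω) := by
    intro ω
    rw [hytil]
    simp [map_sum, map_mul, Complex.conj_ofReal]
  have key : ∫ ω, g k ω * (starRingEnd ℂ) (ytil ω) ∂μ
      = (Real.sqrt τρp : ℂ) * ((β k : ℝ) : ℂ)
        * (starRingEnd ℂ) (inner ℂ (φ k') (φ k) : ℂ) := by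
    have hfun : ∀ ω, g k ω * (starRingEnd ℂ) (ytil ω)
        = (∑ j, (Real.sqrt τρp : ℂ) * (starRingEnd ℂ) (inner ℂ (φ k') (φ j) : ℂ)
            * (g k ω * (starRingEnd ℂ) (g j ω)))
          + ∑ i, (φ k' i) * (g k ω * (starRingEnd ℂ) (w i ω)) := by
      intro ω
      rw [hconjy ω, mul_add]
      simp only [Finset.mul_sum]
      congr 1
      · exact Finset.sum_congr rfl fun j _ => by ring
      · exact Finset.sum_congr rfl fun i _ => by ring
    simp_rw [hfun]
    rw [integral_add
      (integrable_finset_sum _ fun j _ => ((hIntgg j).const_mul _))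
      (integrable_finset_sum _ fun i _ => ((hIntgw i).const_mul _)),
      integral_finset_sum _ (fun j _ => (hIntgg j).const_mul _),
      integral_finset_sum _ (fun i _ => (hIntgw i).const_mul _)]
    simp_rw [integral_const_mul]
    rw [Finset.sum_eq_single k]
    · simp only [hgkgk, hgw, mul_zero, Finset.sum_const_zero, add_zero]
      ring
    · intro j _ hj
      rw [hguncorr k j (Ne.symm hj), mul_zero]
    · intro h; exact absurd (Finset.mem_univ k) h
  -- main computation
  have hmain : ∫ ω, g k ω * (starRingEnd ℂ) (ghat ω) ∂μ
      = ((γ * (β k / β k') : ℝ) : ℂ) * (starRingEnd ℂ) (inner ℂ (φ k') (φ k) : ℂ) := by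
    have h1 : ∀ ω, g k ω * (starRingEnd ℂ) (ghat ω)
        = ((c : ℝ) : ℂ) * (g k ω * (starRingEnd ℂ) (ytil ω)) := by
      intro ω
      rw [hghat]
      simp only [map_mul, Complex.conj_ofReal]
      rw [hc, hDdef, hS]
      ring
    simp_rw [h1]
    rw [integral_const_mul, key]
    have hs : Real.sqrt τρp * Real.sqrt τρp = τρp := Real.mul_self_sqrt hτρp.le
    have hcoef : c * (Real.sqrt τρp * β k) = γ * (β k / β k') := by
      have h2 : Real.sqrt τρp * β k' / D * (Real.sqrt τρp * β k)
          = τρp * β k' * β k / D := by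
        field_simp
        linear_combination (β k' * β k) * hs
      have h3 : τρp * β k' ^ 2 / D * (β k / β k') = τρp * β k' * β k / D := by
        field_simp [(hβ k').ne']
      rw [hc, hγ, h2, h3]
    push_cast [← hcoef]
    ring
  refine ⟨hmain, ?_, ?_⟩
  · rw [hmain]
    rw [norm_mul, RCLike.norm_conj, Complex.norm_real]
    have hγnn : 0 ≤ γ := by
      rw [hγ]
      exact div_nonneg (by positivity) hD.le
    have : 0 ≤ γ * (β k / β k') :=
      mul_nonneg hγnn (div_nonneg (hβ k).le (hβ k').le)
    rw [Real.norm_of_nonneg this]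
  · intro h0
    rw [hmain, h0, map_zero, mul_zero]
end
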